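/- arXiv:1601.02530 — 4 statements merged into one kernel-verified Lean document; each statement's English description precedes it below -/
import Mathlib

section
/- Every matrix γ = [[a,b],[c,d]] in SL₂(ℤ/p³) with c ∈ pℤ/p³ can be written as γ = γ₁γ₂ where γ₁ ∈ SL₂(ℤ/p³) has both off-diagonal entries in pℤ/p³, and γ₂ ∈ SL₂(ℤ/p³) has lower-left entry in p²ℤ/p³. -/
/-!
Since `p` is nilpotent in `ℤ/p³`, so is `c`, hence `ad = 1 + bc` is a unit and so is `a`.
Then `γ` has an LU decomposition `[[a, 0], [c, a⁻¹]] * [[1, a⁻¹b], [0, 1]]`.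
-/

open Matrix

namespace Matrix.SpecialLinearGroup

variable {R : Type*} [CommRing R]

theorem exists_eq_mul_of_isUnit_apply_zero_zero (γ : SpecialLinearGroup (Fin 2) R)
    (ha : IsUnit (γ 0 0)) :
    ∃ γ₁ γ₂ : SpecialLinearGroup (Fin 2) R,
      γ = γ₁ * γ₂ ∧ γ₁ 0 1 = 0 ∧ γ₁ 1 0 = γ 1 0 ∧ γ₂ 1 0 = 0 := by
  obtain ⟨a, ha⟩ := ha
  let γ₁ : SpecialLinearGroup (Fin 2) R := ⟨!![↑a, 0; γ 1 0, ↑a⁻¹], by simp [det_fin_two]⟩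
  refine ⟨γ₁, γ₁⁻¹ * γ, (mul_inv_cancel_left _ _).symm, rfl, rfl, ?_⟩
  show (adjugate (γ₁ : Matrix (Fin 2) (Fin 2) R) * γ) 1 0 = 0
  simp [γ₁, adjugate_fin_two, Matrix.mul_apply, ha, mul_comm]

theorem isUnit_apply_zero_zero_of_isNilpotent (γ : SpecialLinearGroup (Fin 2) R)
    (hc : IsNilpotent (γ 1 0)) : IsUnit (γ 0 0) := by
  have hdet : γ 0 0 * γ 1 1 = 1 + γ 0 1 * γ 1 0 := by
    have := γ.det_coe
    rw [det_fin_two] at this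
    linear_combination this
  have : IsUnit (γ 0 0 * γ 1 1) := hdet ▸ ((Commute.all _ _).isNilpotent_mul_left hc).isUnit_one_add
  exact isUnit_of_mul_isUnit_left this

end Matrix.SpecialLinearGroup

theorem ZMod.isNilpotent_natCast_pow (p n : ℕ) : IsNilpotent (p : ZMod (p ^ n)) :=
  ⟨n, by rw [← Nat.cast_pow, ZMod.natCast_self]⟩

theorem stmt_0_general (p : ℕ)
    (γ : SpecialLinearGroup (Fin 2) (ZMod (p ^ 3)))
    (hc : (p : ZMod (p ^ 3)) ∣ (γ : Matrix (Fin 2) (Fin 2) (ZMod (p ^ 3))) 1 0) :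
    ∃ γ₁ γ₂ : SpecialLinearGroup (Fin 2) (ZMod (p ^ 3)),
      γ = γ₁ * γ₂ ∧
      (p : ZMod (p ^ 3)) ∣ (γ₁ : Matrix (Fin 2) (Fin 2) (ZMod (p ^ 3))) 0 1 ∧
      (p : ZMod (p ^ 3)) ∣ (γ₁ : Matrix (Fin 2) (Fin 2) (ZMod (p ^ 3))) 1 0 ∧
      ((p : ZMod (p ^ 3)) ^ 2) ∣ (γ₂ : Matrix (Fin 2) (Fin 2) (ZMod (p ^ 3))) 1 0 := by
  have hnil : IsNilpotent (γ 1 0) := by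
    obtain ⟨c, hc⟩ := hc
    exact hc ▸ (Commute.all _ _).isNilpotent_mul_right (ZMod.isNilpotent_natCast_pow p 3)
  obtain ⟨γ₁, γ₂, rfl, h01, h10, h10'⟩ := γ.exists_eq_mul_of_isUnit_apply_zero_zero
    (γ.isUnit_apply_zero_zero_of_isNilpotent hnil)
  exact ⟨γ₁, γ₂, rfl, h01 ▸ dvd_zero _, h10 ▸ hc, h10' ▸ dvd_zero _⟩

/-- Every γ ∈ SL₂(ℤ/p³) with lower-left entry in pℤ/p³ factors as γ₁γ₂ where
γ₁ has both off-diagonal entries in pℤ/p³ and γ₂ has lower-left entry in p²ℤ/p³. -/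
theorem stmt_0 (p : ℕ) (hp : p.Prime)
    (γ : SpecialLinearGroup (Fin 2) (ZMod (p ^ 3)))
    (hc : (p : ZMod (p ^ 3)) ∣ (γ : Matrix (Fin 2) (Fin 2) (ZMod (p ^ 3))) 1 0) :
    ∃ γ₁ γ₂ : SpecialLinearGroup (Fin 2) (ZMod (p ^ 3)),
      γ = γ₁ * γ₂ ∧
      (p : ZMod (p ^ 3)) ∣ (γ₁ : Matrix (Fin 2) (Fin 2) (ZMod (p ^ 3))) 0 1 ∧
      (p : ZMod (p ^ 3)) ∣ (γ₁ : Matrix (Fin 2) (Fin 2) (ZMod (p ^ 3))) 1 0 ∧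
      ((p : ZMod (p ^ 3)) ^ 2) ∣ (γ₂ : Matrix (Fin 2) (Fin 2) (ZMod (p ^ 3))) 1 0 :=
  stmt_0_general p γ hc
end

section
/- Let p be a prime and m < m' < n < n' integers. Every matrix γ ∈ SL₂(ℚ_p) whose entries satisfy a,d ∈ ℤ_p, b ∈ p^{-m'}ℤ_p, c ∈ p^nℤ_p factors as γ = γ₁γ₂ with γ₁ ∈ SL₂(ℚ_p) having a₁,d₁ ∈ ℤ_p, b₁ ∈ p^{-m}ℤ_p, c₁ ∈ p^nℤ_p, and γ₂ ∈ SL₂(ℚ_p) having a₂,d₂ ∈ ℤ_p, b₂ ∈ p^{-m'}ℤ_p, c₂ ∈ p^{n'}ℤ_p. -/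
/-!
From m' < n we get ‖bc‖ < 1, so ad = 1 + bc has norm 1 by the ultrametric inequality, and with
‖a‖, ‖d‖ ≤ 1 this forces ‖a‖ = 1. Hence a is a unit of ℤ_p and
γ = [[1, 0], [c/a, 1]] · [[a, b], [0, a⁻¹]], the lower unipotent factor lying in K_{m..n} and the
upper triangular one in K_{m'..n'}.
-/

open Matrix

theorem IsUltrametricDist.norm_eq_one_of_mul_sub_mul_eq_one {K : Type*} [NormedField K]
    [IsUltrametricDist K] {a b c d : K} (ha : ‖a‖ ≤ 1) (hd : ‖d‖ ≤ 1) (hbc : ‖b * c‖ < 1)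
    (h : a * d - b * c = 1) : ‖a‖ = 1 := by
  have had : ‖a * d‖ = 1 := by
    rw [eq_add_of_sub_eq h, norm_add_eq_max_of_norm_ne_norm (by simpa using hbc.ne')]
    simpa using hbc.le
  rw [norm_mul] at had
  nlinarith [norm_nonneg a, norm_nonneg d]

theorem Matrix.SpecialLinearGroup.exists_eq_lowerUnipotent_mul_upper {K : Type*} [Field K]
    (γ : SpecialLinearGroup (Fin 2) K) (ha : γ 0 0 ≠ 0) :
    ∃ γ₁ γ₂ : SpecialLinearGroup (Fin 2) K, γ = γ₁ * γ₂ ∧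
      (γ₁ : Matrix (Fin 2) (Fin 2) K) = !![1, 0; γ 1 0 / γ 0 0, 1] ∧
      (γ₂ : Matrix (Fin 2) (Fin 2) K) = !![γ 0 0, γ 0 1; 0, (γ 0 0)⁻¹] := by
  have hdet : γ 0 0 * γ 1 1 - γ 0 1 * γ 1 0 = 1 := by rw [← det_fin_two]; exact γ.det_coe
  have hγ : (γ : Matrix (Fin 2) (Fin 2) K) =
      !![1, 0; γ 1 0 / γ 0 0, 1] * !![γ 0 0, γ 0 1; 0, (γ 0 0)⁻¹] := by
    ext i j
    fin_cases i <;> fin_cases j <;> simp <;> field_simp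
    linear_combination hdet
  exact ⟨⟨_, by simp [det_fin_two_of]⟩, ⟨_, by simp [det_fin_two_of, ha]⟩, Subtype.ext hγ, rfl, rfl⟩

theorem Padic.norm_le_of_norm_p_zpow_mul_le_one {p : ℕ} [Fact p.Prime] {k : ℤ} {x : ℚ_[p]}
    (h : ‖(p : ℚ_[p]) ^ k * x‖ ≤ 1) : ‖x‖ ≤ (p : ℝ) ^ k := by
  have hp : (0 : ℝ) < (p : ℝ) ^ k := zpow_pos (by exact_mod_cast (Fact.out : p.Prime).pos) _
  rwa [norm_mul, norm_p_zpow, _root_.zpow_neg, inv_mul_le_iff₀ hp, mul_one] at h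

-- Membership x ∈ p^{-k}ℤ_p is written ‖p ^ k * x‖ ≤ 1.
theorem stmt_5_general (p : ℕ) [Fact p.Prime] (m m' n n' : ℤ)
    (h2 : m' < n)
    (γ : SpecialLinearGroup (Fin 2) ℚ_[p])
    (ha : ‖(γ : Matrix (Fin 2) (Fin 2) ℚ_[p]) 0 0‖ ≤ 1)
    (hd : ‖(γ : Matrix (Fin 2) (Fin 2) ℚ_[p]) 1 1‖ ≤ 1)
    (hb : ‖(p : ℚ_[p]) ^ m' * (γ : Matrix (Fin 2) (Fin 2) ℚ_[p]) 0 1‖ ≤ 1)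
    (hc : ‖(p : ℚ_[p]) ^ (-n) * (γ : Matrix (Fin 2) (Fin 2) ℚ_[p]) 1 0‖ ≤ 1) :
    ∃ γ₁ γ₂ : SpecialLinearGroup (Fin 2) ℚ_[p],
      γ = γ₁ * γ₂ ∧
      ‖(γ₁ : Matrix (Fin 2) (Fin 2) ℚ_[p]) 0 0‖ ≤ 1 ∧
      ‖(γ₁ : Matrix (Fin 2) (Fin 2) ℚ_[p]) 1 1‖ ≤ 1 ∧
      ‖(p : ℚ_[p]) ^ m * (γ₁ : Matrix (Fin 2) (Fin 2) ℚ_[p]) 0 1‖ ≤ 1 ∧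
      ‖(p : ℚ_[p]) ^ (-n) * (γ₁ : Matrix (Fin 2) (Fin 2) ℚ_[p]) 1 0‖ ≤ 1 ∧
      ‖(γ₂ : Matrix (Fin 2) (Fin 2) ℚ_[p]) 0 0‖ ≤ 1 ∧
      ‖(γ₂ : Matrix (Fin 2) (Fin 2) ℚ_[p]) 1 1‖ ≤ 1 ∧
      ‖(p : ℚ_[p]) ^ m' * (γ₂ : Matrix (Fin 2) (Fin 2) ℚ_[p]) 0 1‖ ≤ 1 ∧
      ‖(p : ℚ_[p]) ^ (-n') * (γ₂ : Matrix (Fin 2) (Fin 2) ℚ_[p]) 1 0‖ ≤ 1 := by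
  have hp : (1 : ℝ) < p := by exact_mod_cast (Fact.out : p.Prime).one_lt
  have hbc : ‖γ 0 1 * γ 1 0‖ < 1 :=
    calc ‖γ 0 1 * γ 1 0‖ = ‖γ 0 1‖ * ‖γ 1 0‖ := norm_mul _ _
      _ ≤ (p : ℝ) ^ m' * (p : ℝ) ^ (-n) :=
        mul_le_mul (Padic.norm_le_of_norm_p_zpow_mul_le_one hb)
          (Padic.norm_le_of_norm_p_zpow_mul_le_one hc) (norm_nonneg _) (by positivity)
      _ = (p : ℝ) ^ (m' - n) := by rw [sub_eq_add_neg, zpow_add₀ (by linarith)]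
      _ < 1 := zpow_lt_one_of_neg₀ hp (by omega)
  have hdet : γ 0 0 * γ 1 1 - γ 0 1 * γ 1 0 = 1 := by rw [← det_fin_two]; exact γ.det_coe
  have ha₁ : ‖γ 0 0‖ = 1 := IsUltrametricDist.norm_eq_one_of_mul_sub_mul_eq_one ha hd hbc hdet
  obtain ⟨γ₁, γ₂, hγ, h₁, h₂⟩ :=
    γ.exists_eq_lowerUnipotent_mul_upper (norm_ne_zero_iff.mp (ha₁ ▸ one_ne_zero))
  refine ⟨γ₁, γ₂, hγ, ?_⟩
  simpa [h₁, h₂, ha₁] using And.intro hc hb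

/-- K_{m..n}·K_{m'..n'} ⊇ K_{m'..n} for m < m' < n < n': every γ ∈ SL₂(ℚ_p) with
a,d ∈ ℤ_p, b ∈ p^{-m'}ℤ_p, c ∈ p^{n}ℤ_p factors as γ₁γ₂ with γ₁ ∈ K_{m..n} and
γ₂ ∈ K_{m'..n'}.  Membership x ∈ p^{-k}ℤ_p is expressed as ‖p^k · x‖ ≤ 1. -/
theorem stmt_5 (p : ℕ) [Fact p.Prime] (m m' n n' : ℤ)
    (h1 : m < m') (h2 : m' < n) (h3 : n < n')
    (γ : SpecialLinearGroup (Fin 2) ℚ_[p])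
    (ha : ‖(γ : Matrix (Fin 2) (Fin 2) ℚ_[p]) 0 0‖ ≤ 1)
    (hd : ‖(γ : Matrix (Fin 2) (Fin 2) ℚ_[p]) 1 1‖ ≤ 1)
    (hb : ‖(p : ℚ_[p]) ^ m' * (γ : Matrix (Fin 2) (Fin 2) ℚ_[p]) 0 1‖ ≤ 1)
    (hc : ‖(p : ℚ_[p]) ^ (-n) * (γ : Matrix (Fin 2) (Fin 2) ℚ_[p]) 1 0‖ ≤ 1) :
    ∃ γ₁ γ₂ : SpecialLinearGroup (Fin 2) ℚ_[p],
      γ = γ₁ * γ₂ ∧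
      ‖(γ₁ : Matrix (Fin 2) (Fin 2) ℚ_[p]) 0 0‖ ≤ 1 ∧
      ‖(γ₁ : Matrix (Fin 2) (Fin 2) ℚ_[p]) 1 1‖ ≤ 1 ∧
      ‖(p : ℚ_[p]) ^ m * (γ₁ : Matrix (Fin 2) (Fin 2) ℚ_[p]) 0 1‖ ≤ 1 ∧
      ‖(p : ℚ_[p]) ^ (-n) * (γ₁ : Matrix (Fin 2) (Fin 2) ℚ_[p]) 1 0‖ ≤ 1 ∧
      ‖(γ₂ : Matrix (Fin 2) (Fin 2) ℚ_[p]) 0 0‖ ≤ 1 ∧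
      ‖(γ₂ : Matrix (Fin 2) (Fin 2) ℚ_[p]) 1 1‖ ≤ 1 ∧
      ‖(p : ℚ_[p]) ^ m' * (γ₂ : Matrix (Fin 2) (Fin 2) ℚ_[p]) 0 1‖ ≤ 1 ∧
      ‖(p : ℚ_[p]) ^ (-n') * (γ₂ : Matrix (Fin 2) (Fin 2) ℚ_[p]) 1 0‖ ≤ 1 :=
  stmt_5_general p m m' n n' h2 γ ha hd hb hc
end

section
/- Let V be a finite-dimensional complex inner product space and let {e_ℓ} be a family of orthogonal projections indexed by subsegments ℓ of a fixed segment m..n with n − m ≥ 3, such that e_ℓ ∘ e_{ℓ'} = e_{ℓ∩ℓ'} whenever ℓ ⊆ ℓ', ℓ ⊇ ℓ', or #(ℓ ∩ ℓ') ≥ 2. Define e* := e_{m..n} − e_{m+1..n} − e_{m..n−1} + e_{m+1..n−1}. Then e* ∘ e_{ℓ'} = 0 for every proper subsegment ℓ' ⊊ m..n. -/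
/-- Operator calculus: given orthogonal projections e_{a..b} indexed by subsegments
a..b of m..n (n − m ≥ 3) with e_ℓ ∘ e_{ℓ'} = e_{ℓ∩ℓ'} whenever one segment contains
the other or their intersection has ≥ 2 elements, the operator
e* = e_{m..n} − e_{m+1..n} − e_{m..n−1} + e_{m+1..n−1} satisfies e* ∘ e_{ℓ'} = 0
for every proper subsegment ℓ' ⊊ m..n. -/
theorem stmt_10 {V : Type*} [NormedAddCommGroup V] [InnerProductSpace ℂ V]
    [FiniteDimensional ℂ V]
    (m n : ℤ) (hmn : 3 ≤ n - m)
    (e : ℤ → ℤ → (V →L[ℂ] V))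
    (hproj : ∀ a b, m ≤ a → a ≤ b → b ≤ n →
      IsSelfAdjoint (e a b) ∧ (e a b).comp (e a b) = e a b)
    (hcomp : ∀ a b a' b', m ≤ a → a ≤ b → b ≤ n → m ≤ a' → a' ≤ b' → b' ≤ n →
      (Finset.Icc a b ⊆ Finset.Icc a' b' ∨ Finset.Icc a' b' ⊆ Finset.Icc a b ∨
        2 ≤ (Finset.Icc a b ∩ Finset.Icc a' b').card) →
      (e a b).comp (e a' b') = e (max a a') (min b b')) :
    ∀ m' n', m ≤ m' → m' ≤ n' → n' ≤ n → ¬(m' = m ∧ n' = n) →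
      (e m n - e (m + 1) n - e m (n - 1) + e (m + 1) (n - 1)).comp (e m' n') = 0 := by
  intro m' n' hm' hmn' hn' hne
  have hcase : m + 1 ≤ m' ∨ (m' = m ∧ n' ≤ n - 1) := by omega
  rcases hcase with h | ⟨heq, h⟩
  · -- ℓ' ⊆ L = (m+1)..n
    have habs : (e (m + 1) n).comp (e m' n') = e m' n' := by
      have := hcomp (m+1) n m' n' (by omega) (by omega) le_rfl hm' hmn' hn'
        (Or.inr (Or.inl (Finset.Icc_subset_Icc h hn')))
      rw [this, max_eq_right h, min_eq_right hn']
    have h1 : (e m n).comp (e (m+1) n) = e (m+1) n := by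
      have := hcomp m n (m+1) n le_rfl (by omega) le_rfl (by omega) (by omega) le_rfl
        (Or.inr (Or.inl (Finset.Icc_subset_Icc (by omega) le_rfl)))
      rw [this, max_eq_right (by omega : m ≤ m+1), min_self]
    have h2 : (e (m+1) n).comp (e (m+1) n) = e (m+1) n :=
      (hproj (m+1) n (by omega) (by omega) le_rfl).2
    have h3 : (e m (n-1)).comp (e (m+1) n) = e (m+1) (n-1) := by
      have := hcomp m (n-1) (m+1) n le_rfl (by omega) (by omega) (by omega) (by omega) le_rfl
        (Or.inr (Or.inr (by
          have hsub : Finset.Icc (m+1) (n-1) ⊆ Finset.Icc m (n-1) ∩ Finset.Icc (m+1) n := by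
            intro x hx
            simp only [Finset.mem_inter, Finset.mem_Icc] at *
            omega
          calc 2 ≤ (Finset.Icc (m+1) (n-1)).card := by
                rw [Int.card_Icc]; omega
            _ ≤ _ := Finset.card_le_card hsub)))
      rw [this, max_eq_right (by omega : m ≤ m+1), min_eq_left (by omega : n-1 ≤ n)]
    have h4 : (e (m+1) (n-1)).comp (e (m+1) n) = e (m+1) (n-1) := by
      have := hcomp (m+1) (n-1) (m+1) n (by omega) (by omega) (by omega) (by omega) (by omega)
        le_rfl (Or.inl (Finset.Icc_subset_Icc le_rfl (by omega)))
      rw [this, max_self, min_eq_left (by omega : n-1 ≤ n)]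
    have hzero : (e m n - e (m + 1) n - e m (n - 1) + e (m + 1) (n - 1)).comp (e (m+1) n) = 0 := by
      rw [ContinuousLinearMap.add_comp, ContinuousLinearMap.sub_comp,
        ContinuousLinearMap.sub_comp, h1, h2, h3, h4]
      abel
    calc (e m n - e (m + 1) n - e m (n - 1) + e (m + 1) (n - 1)).comp (e m' n')
        = ((e m n - e (m + 1) n - e m (n - 1) + e (m + 1) (n - 1)).comp
            (e (m+1) n)).comp (e m' n') := by rw [ContinuousLinearMap.comp_assoc, habs]
      _ = 0 := by rw [hzero]; ext x; simp
  · -- ℓ' ⊆ R = m'..(n-1)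
    subst heq
    have habs : (e m' (n-1)).comp (e m' n') = e m' n' := by
      have := hcomp m' (n-1) m' n' le_rfl (by omega) (by omega) hm' hmn' hn'
        (Or.inr (Or.inl (Finset.Icc_subset_Icc le_rfl h)))
      rw [this, max_self, min_eq_right h]
    have h1 : (e m' n).comp (e m' (n-1)) = e m' (n-1) := by
      have := hcomp m' n m' (n-1) le_rfl (by omega) le_rfl le_rfl (by omega) (by omega)
        (Or.inr (Or.inl (Finset.Icc_subset_Icc le_rfl (by omega))))
      rw [this, max_self, min_eq_right (by omega : n-1 ≤ n)]
    have h2 : (e (m'+1) n).comp (e m' (n-1)) = e (m'+1) (n-1) := by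
      have := hcomp (m'+1) n m' (n-1) (by omega) (by omega) le_rfl le_rfl (by omega) (by omega)
        (Or.inr (Or.inr (by
          have hsub : Finset.Icc (m'+1) (n-1) ⊆ Finset.Icc (m'+1) n ∩ Finset.Icc m' (n-1) := by
            intro x hx
            simp only [Finset.mem_inter, Finset.mem_Icc] at *
            omega
          calc 2 ≤ (Finset.Icc (m'+1) (n-1)).card := by
                rw [Int.card_Icc]; omega
            _ ≤ _ := Finset.card_le_card hsub)))
      rw [this, max_eq_left (by omega : m' ≤ m'+1), min_eq_right (by omega : n-1 ≤ n)]
    have h3 : (e m' (n-1)).comp (e m' (n-1)) = e m' (n-1) :=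
      (hproj m' (n-1) le_rfl (by omega) (by omega)).2
    have h4 : (e (m'+1) (n-1)).comp (e m' (n-1)) = e (m'+1) (n-1) := by
      have := hcomp (m'+1) (n-1) m' (n-1) (by omega) (by omega) (by omega) le_rfl (by omega)
        (by omega) (Or.inl (Finset.Icc_subset_Icc (by omega) le_rfl))
      rw [this, max_eq_left (by omega : m' ≤ m'+1), min_self]
    have hzero : (e m' n - e (m' + 1) n - e m' (n - 1) + e (m' + 1) (n - 1)).comp (e m' (n-1)) = 0 := by
      rw [ContinuousLinearMap.add_comp, ContinuousLinearMap.sub_comp,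
        ContinuousLinearMap.sub_comp, h1, h2, h3, h4]
      abel
    calc (e m' n - e (m' + 1) n - e m' (n - 1) + e (m' + 1) (n - 1)).comp (e m' n')
        = ((e m' n - e (m' + 1) n - e m' (n - 1) + e (m' + 1) (n - 1)).comp
            (e m' (n-1))).comp (e m' n') := by rw [ContinuousLinearMap.comp_assoc, habs]
      _ = 0 := by rw [hzero]; ext x; simp
end

section
/- In SL₂(ℤ/p³ℤ), the multiplication map from ({[[a,b],[c,d]] ∈ SL₂(ℤ/p³) : b,c ∈ p·ℤ/p³}) × ({[[a,b],[c,d]] ∈ SL₂(ℤ/p³) : c ∈ p²·ℤ/p³}) to {[[a,b],[c,d]] ∈ SL₂(ℤ/p³) : c ∈ p·ℤ/p³} given by (γ₁,γ₂) ↦ γ₁γ₂ is surjective. -/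
open Matrix

/-- In SL₂(ℤ/p³ℤ), the multiplication map from
{γ : both off-diagonal entries in pℤ/p³} × {γ : lower-left entry in p²ℤ/p³}
to {γ : lower-left entry in pℤ/p³} is surjective. -/
theorem stmt_16 (p : ℕ) (hp : p.Prime) :
    Set.SurjOn
      (fun x : SpecialLinearGroup (Fin 2) (ZMod (p ^ 3)) ×
          SpecialLinearGroup (Fin 2) (ZMod (p ^ 3)) => (x.1 * x.2 : SpecialLinearGroup (Fin 2) (ZMod (p ^ 3))))
      (({γ | (p : ZMod (p ^ 3)) ∣ (γ : Matrix (Fin 2) (Fin 2) (ZMod (p ^ 3))) 0 1 ∧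
             (p : ZMod (p ^ 3)) ∣ (γ : Matrix (Fin 2) (Fin 2) (ZMod (p ^ 3))) 1 0} :
          Set (SpecialLinearGroup (Fin 2) (ZMod (p ^ 3)))) ×ˢ
       ({γ | ((p : ZMod (p ^ 3)) ^ 2) ∣ (γ : Matrix (Fin 2) (Fin 2) (ZMod (p ^ 3))) 1 0} :
          Set (SpecialLinearGroup (Fin 2) (ZMod (p ^ 3)))))
      {γ | (p : ZMod (p ^ 3)) ∣ (γ : Matrix (Fin 2) (Fin 2) (ZMod (p ^ 3))) 1 0} := by
  rintro γ ⟨c', hc'⟩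
  set a := (γ : Matrix (Fin 2) (Fin 2) (ZMod (p ^ 3))) 0 0 with ha
  set b := (γ : Matrix (Fin 2) (Fin 2) (ZMod (p ^ 3))) 0 1 with hb
  set c := (γ : Matrix (Fin 2) (Fin 2) (ZMod (p ^ 3))) 1 0 with hc
  set d := (γ : Matrix (Fin 2) (Fin 2) (ZMod (p ^ 3))) 1 1 with hd
  have hdet : a * d - b * c = 1 := by
    have h2 := γ.2
    rw [Matrix.det_fin_two] at h2
    exact h2
  have hp3 : ((p : ZMod (p ^ 3))) ^ 3 = 0 := by
    rw [← Nat.cast_pow, ZMod.natCast_self]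
  set n : ZMod (p ^ 3) := b * c with hn
  have hn3 : n ^ 3 = 0 := by
    rw [hn, hc']
    have : (b * ((p : ZMod (p ^ 3)) * c')) ^ 3 = (p : ZMod (p ^ 3)) ^ 3 * (b * c') ^ 3 := by ring
    rw [this, hp3, zero_mul]
  set u : ZMod (p ^ 3) := d * (1 - n + n ^ 2) with hu
  have hau : a * u = 1 := by
    have had : a * d = 1 + n := by rw [hn]; linear_combination hdet
    calc a * u = (a * d) * (1 - n + n ^ 2) := by rw [hu]; ring
    _ = (1 + n) * (1 - n + n ^ 2) := by rw [had]
    _ = 1 + n ^ 3 := by ring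
    _ = 1 := by rw [hn3, add_zero]
  set t : ZMod (p ^ 3) := u * b with ht
  have hdetU : (!![1, t; 0, 1] : Matrix (Fin 2) (Fin 2) (ZMod (p ^ 3))).det = 1 := by
    simp [Matrix.det_fin_two_of]
  set U : SpecialLinearGroup (Fin 2) (ZMod (p ^ 3)) := ⟨!![1, t; 0, 1], hdetU⟩ with hU
  have hUinv : ((U⁻¹ : SpecialLinearGroup (Fin 2) (ZMod (p ^ 3))) :
      Matrix (Fin 2) (Fin 2) (ZMod (p ^ 3))) = !![1, -t; 0, 1] := by
    rw [Matrix.SpecialLinearGroup.coe_inv, hU]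
    simp [Matrix.adjugate_fin_two_of]
  refine ⟨(γ * U⁻¹, U), ⟨⟨?_, ?_⟩, ?_⟩, ?_⟩
  · -- upper-right entry of γ * U⁻¹
    show (p : ZMod (p ^ 3)) ∣ ((γ * U⁻¹ : SpecialLinearGroup (Fin 2) (ZMod (p ^ 3))) :
      Matrix (Fin 2) (Fin 2) (ZMod (p ^ 3))) 0 1
    rw [Matrix.SpecialLinearGroup.coe_mul, hUinv]
    have : ((γ : Matrix (Fin 2) (Fin 2) (ZMod (p ^ 3))) * !![1, -t; 0, 1]) 0 1
        = a * (-t) + b * 1 := by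
      rw [Matrix.mul_apply, Fin.sum_univ_two]
      simp [← ha, ← hb]
    rw [this]
    have hz : a * (-t) + b * 1 = 0 := by
      have : a * (-t) = -(a * u) * b := by rw [ht]; ring
      rw [this, hau]; ring
    rw [hz]
    exact dvd_zero _
  · -- lower-left entry of γ * U⁻¹
    show (p : ZMod (p ^ 3)) ∣ ((γ * U⁻¹ : SpecialLinearGroup (Fin 2) (ZMod (p ^ 3))) :
      Matrix (Fin 2) (Fin 2) (ZMod (p ^ 3))) 1 0
    rw [Matrix.SpecialLinearGroup.coe_mul, hUinv]
    have : ((γ : Matrix (Fin 2) (Fin 2) (ZMod (p ^ 3))) * !![1, -t; 0, 1]) 1 0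
        = c * 1 + d * 0 := by
      rw [Matrix.mul_apply, Fin.sum_univ_two]
      simp [← hc, ← hd]
    rw [this, hc']
    exact ⟨c', by ring⟩
  · -- lower-left entry of U
    show ((p : ZMod (p ^ 3)) ^ 2) ∣ (U : Matrix (Fin 2) (Fin 2) (ZMod (p ^ 3))) 1 0
    rw [hU]
    simp
  · show (γ * U⁻¹) * U = γ
    group
end
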